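/- arXiv:math/0404370 — 2 statements merged into one kernel-verified Lean document; each statement's English description precedes it below -/
import Mathlib

section
/- Let M be a matroid on a finite ground set E and let ω ∈ ℝ^E. Then ω lies in the Bergman fan B̃(M) (i.e., every element of E lies in some ω-minimum basis) if and only if every element of E is ω-minimum in some cocircuit of M. -/
open scoped Classical

variable {α : Type*}

/-- The ω-weight of a set of elements: the sum of ω over the set. -/
noncomputable def wSum (ω : α → ℝ) (B : Set α) : ℝ := ∑ᶠ e ∈ B, ω e

/-- `B` is an ω-minimum basis of `M`: a basis whose ω-weight is minimum among all bases. -/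
def IsMinBase [Fintype α] (M : Matroid α) (ω : α → ℝ) (B : Set α) : Prop :=
  M.IsBase B ∧ ∀ B' : Set α, M.IsBase B' → wSum ω B ≤ wSum ω B'

/-- `ω` lies in the Bergman fan of `M`: every element lies in some ω-minimum basis. -/
def InBergmanFan [Fintype α] (M : Matroid α) (ω : α → ℝ) : Prop :=
  ∀ e : α, ∃ B : Set α, IsMinBase M ω B ∧ e ∈ B

/-- `C` is a circuit of `M`: a minimal dependent set. -/
def IsCircuit (M : Matroid α) (C : Set α) : Prop := Minimal M.Dep C

/-- A cocircuit of `M` is a circuit of the dual matroid `M✶`. -/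
def IsCocircuit (M : Matroid α) (C : Set α) : Prop := IsCircuit M✶ C

/-! If `B` is an ω-minimum base containing `e`, every `f` in the fundamental cocircuit
`E \ cl(B \ {e})` gives a base `B - e + f`, so `ω e ≤ ω f`. Conversely, if `e` is ω-minimum in
a cocircuit `C` and lies outside a minimum base `B`, the fundamental circuit of `e` meets `C` in
some `f ≠ e`, and `B - f + e` is again a minimum base. -/

open Set

lemma wSum_insert_sdiff_singleton_add (ω : α → ℝ) {B : Set α} {e f : α} (hB : B.Finite)
    (hf : f ∈ B) (he : e ∉ B \ {f}) :
    wSum ω (insert e (B \ {f})) + ω f = wSum ω B + ω e := by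
  have hBf : (B \ {f}).Finite := hB.subset sdiff_subset
  have hsplit : wSum ω B = ω f + wSum ω (B \ {f}) := by
    conv_lhs => rw [← insert_sdiff_self_of_mem hf]
    exact finsum_mem_insert ω (fun h => h.2 rfl) hBf
  rw [hsplit, wSum, finsum_mem_insert ω he hBf, wSum]
  ring

lemma Matroid.IsCocircuit.exists_mem_isBase_exchange {M : Matroid α} {B C : Set α} {e : α}
    (hC : M.IsCocircuit C) (hB : M.IsBase B) (heC : e ∈ C) (heB : e ∉ B) :
    ∃ f ∈ B ∩ C, M.IsBase (insert e (B \ {f})) := by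
  have heE : e ∈ M.E := hC.subset_ground heC
  have hF := hB.fundCircuit_isCircuit heE heB
  obtain ⟨f, ⟨hfF, hfC⟩, hfe⟩ :=
    (hF.isCocircuit_inter_nontrivial hC ⟨e, M.mem_fundCircuit e B, heC⟩).exists_ne e
  have hfB : f ∈ B := (mem_insert_iff.1 (M.fundCircuit_subset_insert e B hfF)).resolve_left hfe
  have hind : M.Indep (insert e B \ {f}) :=
    (hB.indep.mem_fundCircuit_iff (by rwa [hB.closure_eq]) heB).1 hfF
  rw [← insert_sdiff_singleton_comm (Ne.symm hfe)] at hind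
  exact ⟨f, ⟨hfB, hfC⟩, hB.exchange_isBase_of_indep heB hind⟩

section MinBase

variable [Fintype α] {M : Matroid α} {ω : α → ℝ} {B C : Set α} {e f : α}

lemma exists_isMinBase (M : Matroid α) (ω : α → ℝ) : ∃ B, IsMinBase M ω B := by
  obtain ⟨B, hB, hmin⟩ :=
    exists_min_image {B : Set α | M.IsBase B} (wSum ω) (toFinite _) M.exists_isBase
  exact ⟨B, hB, hmin⟩

lemma IsMinBase.le_of_isBase_exchange (hB : IsMinBase M ω B) (hf : f ∈ B) (he : e ∉ B \ {f})
    (hB' : M.IsBase (insert e (B \ {f}))) : ω f ≤ ω e := by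
  have := hB.2 _ hB'
  have := wSum_insert_sdiff_singleton_add ω (toFinite B) hf he
  linarith

lemma IsMinBase.exchange (hB : IsMinBase M ω B) (hf : f ∈ B) (he : e ∉ B \ {f})
    (hB' : M.IsBase (insert e (B \ {f}))) (hef : ω e ≤ ω f) :
    IsMinBase M ω (insert e (B \ {f})) := by
  refine ⟨hB', fun B'' hB'' => ?_⟩
  have := hB.2 B'' hB''
  have := wSum_insert_sdiff_singleton_add ω (toFinite B) hf he
  linarith

lemma IsMinBase.exists_isCocircuit_forall_le (hB : IsMinBase M ω B) (he : e ∈ B) :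
    ∃ C, M.IsCocircuit C ∧ e ∈ C ∧ ∀ f ∈ C, ω e ≤ ω f := by
  refine ⟨M.E \ M.closure (B \ {e}), hB.1.compl_closure_sdiff_singleton_isCocircuit he,
    ⟨hB.1.subset_ground he, hB.1.indep.notMem_closure_sdiff_of_mem he⟩, fun f hf => ?_⟩
  have hfB : f ∉ B \ {e} := fun hfB =>
    hf.2 (M.subset_closure _ (sdiff_subset.trans hB.1.subset_ground) hfB)
  exact hB.le_of_isBase_exchange he hfB (hB.1.exchange_base_of_notMem_closure he hf.2)

lemma exists_isMinBase_mem_of_isCocircuit (hC : M.IsCocircuit C) (heC : e ∈ C)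
    (hmin : ∀ f ∈ C, ω e ≤ ω f) : ∃ B, IsMinBase M ω B ∧ e ∈ B := by
  obtain ⟨B, hB⟩ := exists_isMinBase M ω
  by_cases heB : e ∈ B
  · exact ⟨B, hB, heB⟩
  obtain ⟨f, ⟨hfB, hfC⟩, hB'⟩ := hC.exists_mem_isBase_exchange hB.1 heC heB
  exact ⟨_, hB.exchange hfB (fun h => heB h.1) hB' (hmin f hfC), mem_insert e _⟩

end MinBase

theorem stmt1_general [Fintype α] (M : Matroid α) (ω : α → ℝ) :
    InBergmanFan M ω ↔
      ∀ e : α, ∃ C : Set α, IsCocircuit M C ∧ e ∈ C ∧ ∀ f ∈ C, ω e ≤ ω f := by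
  -- `IsCocircuit M C` unfolds to Mathlib's `M.IsCocircuit C`.
  refine ⟨fun h e => ?_, fun h e => ?_⟩
  · obtain ⟨B, hB, heB⟩ := h e
    exact hB.exists_isCocircuit_forall_le heB
  · obtain ⟨C, hC, heC, hmin⟩ := h e
    exact exists_isMinBase_mem_of_isCocircuit hC heC hmin

/-- ω lies in the Bergman fan of M iff every element of the ground set
is ω-minimum in some cocircuit of M. -/
theorem stmt1 [Fintype α] (M : Matroid α) (hE : M.E = Set.univ) (ω : α → ℝ) :
    InBergmanFan M ω ↔
      ∀ e : α, ∃ C : Set α, IsCocircuit M C ∧ e ∈ C ∧ ∀ f ∈ C, ω e ≤ ω f :=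
  stmt1_general M ω
end

section
/- Let X be a finite set with at least two elements, let ω be a dissimilarity map on X, let ω_U be its subdominant ultrametric, and set ε = (1/2) · max_{x ≠ y} (ω(x,y) − ω_U(x,y)). Define ω_U^{+ε} by ω_U^{+ε}(x,y) = ω_U(x,y) + ε for x ≠ y and ω_U^{+ε}(x,x) = 0. Then ω_U^{+ε} is an ultrametric, and it is ℓ∞-optimal: for every ultrametric δ on X, max_{x ≠ y} |ω(x,y) − ω_U^{+ε}(x,y)| ≤ max_{x ≠ y} |ω(x,y) − δ(x,y)|, and moreover max_{x ≠ y} |ω(x,y) − ω_U^{+ε}(x,y)| = ε. -/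
/-!
Everything rests on reading `ω_U x y ≤ r` as "x and y are joined by a chain whose steps all have
ω-weight at most r". Concatenating and reversing chains makes ω_U an ultrametric, and the strong
triangle inequality propagated along such a chain shows that an ultrametric δ with
`|ω - δ| ≤ η` satisfies `δ ≤ ω_U + η`. Since `0 ≤ ω - ω_U ≤ 2ε`, the shift `ω_U + ε` is within ε
of ω; conversely, at a pair where `ω - ω_U = 2ε` we get `ω ≤ δ + η ≤ ω_U + 2η`, so `η ≥ ε`.
-/

open scoped Classical

variable {X : Type*}

/-- A dissimilarity map on X: a symmetric function vanishing on the diagonal. -/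
def IsDissimilarity (δ : X → X → ℝ) : Prop :=
  (∀ x, δ x x = 0) ∧ ∀ x y, δ x y = δ y x

/-- An ultrametric on X: a dissimilarity map satisfying the strong triangle
inequality on pairwise distinct triples. -/
def IsUltrametricMap (δ : X → X → ℝ) : Prop :=
  IsDissimilarity δ ∧
    ∀ x y z : X, x ≠ y → y ≠ z → x ≠ z → δ x z ≤ max (δ x y) (δ y z)

/-- The subdominant ultrametric of ω: for x ≠ y, the minimum over all finite
sequences x = v₀, v₁, …, v_m = y (m ≥ 1) of the largest weight ω(v_{t-1}, v_t)
of a step of the sequence. -/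
noncomputable def subdomUltra (ω : X → X → ℝ) (x y : X) : ℝ :=
  if x = y then 0 else
    sInf {r : ℝ | ∃ (m : ℕ) (hm : 1 ≤ m) (v : ℕ → X), v 0 = x ∧ v m = y ∧
      r = (Finset.Icc 1 m).sup' (Finset.nonempty_Icc.mpr hm)
            (fun t => ω (v (t - 1)) (v t))}

open Relation

theorem Relation.transGen_iff_exists_seq {α : Type*} {r : α → α → Prop} {x y : α} :
    TransGen r x y ↔ ∃ m, 1 ≤ m ∧ ∃ v : ℕ → α, v 0 = x ∧ v m = y ∧
      ∀ t ∈ Finset.Icc 1 m, r (v (t - 1)) (v t) := by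
  constructor
  · intro h
    induction h with
    | @single b hxb =>
      exact ⟨1, le_rfl, fun t => if t = 0 then x else b, by simp, by simp, by simpa⟩
    | @tail b c _ hbc ih =>
      obtain ⟨m, hm, v, hv0, hvm, hv⟩ := ih
      refine ⟨m + 1, by omega, fun t => if t ≤ m then v t else c, by simp [hv0], by simp, ?_⟩
      intro t ht
      obtain ⟨ht1, ht2⟩ := Finset.mem_Icc.mp ht
      rcases Nat.lt_or_eq_of_le ht2 with ht2 | rfl
      · simpa [show t ≤ m by omega, show t - 1 ≤ m by omega] using
          hv t (Finset.mem_Icc.mpr ⟨ht1, by omega⟩)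
      · simpa [hvm] using hbc
  · rintro ⟨m, hm, v, rfl, rfl, hv⟩
    induction m, hm using Nat.le_induction with
    | base => exact .single (by simpa using hv 1 (by simp))
    | succ m hm ih =>
      exact .tail (ih fun t ht => hv t (Finset.Icc_subset_Icc_right (by omega) ht))
        (by simpa using hv (m + 1) (by simp))

section Subdominant

variable {ω : X → X → ℝ} {x y z : X} {r : ℝ}

def pathMaxima (ω : X → X → ℝ) (x y : X) : Set ℝ :=
  {r : ℝ | ∃ (m : ℕ) (hm : 1 ≤ m) (v : ℕ → X), v 0 = x ∧ v m = y ∧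
    r = (Finset.Icc 1 m).sup' (Finset.nonempty_Icc.mpr hm) (fun t => ω (v (t - 1)) (v t))}

theorem subdomUltra_of_ne (hxy : x ≠ y) : subdomUltra ω x y = sInf (pathMaxima ω x y) :=
  if_neg hxy

theorem pathMaxima_finite [Finite X] : (pathMaxima ω x y).Finite := by
  refine (Set.finite_range (Function.uncurry ω)).subset ?_
  rintro _ ⟨m, hm, v, -, -, rfl⟩
  obtain ⟨t, -, ht⟩ := Finset.exists_mem_eq_sup' (Finset.nonempty_Icc.mpr hm)
    (fun t => ω (v (t - 1)) (v t))
  exact ⟨(v (t - 1), v t), ht.symm⟩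

theorem exists_mem_pathMaxima_le_iff :
    (∃ s ∈ pathMaxima ω x y, s ≤ r) ↔ TransGen (fun a b => ω a b ≤ r) x y := by
  rw [transGen_iff_exists_seq]
  constructor
  · rintro ⟨_, ⟨m, hm, v, hv0, hvm, rfl⟩, hle⟩
    exact ⟨m, hm, v, hv0, hvm, (Finset.sup'_le_iff _ _).mp hle⟩
  · rintro ⟨m, hm, v, hv0, hvm, hv⟩
    exact ⟨_, ⟨m, hm, v, hv0, hvm, rfl⟩, Finset.sup'_le _ _ hv⟩

theorem subdomUltra_le_iff [Finite X] (hxy : x ≠ y) :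
    subdomUltra ω x y ≤ r ↔ TransGen (fun a b => ω a b ≤ r) x y := by
  rw [subdomUltra_of_ne hxy, ← exists_mem_pathMaxima_le_iff]
  obtain ⟨s, hs, -⟩ := exists_mem_pathMaxima_le_iff.mpr
    (.single le_rfl : TransGen (fun a b => ω a b ≤ ω x y) x y)
  exact ⟨fun h => ⟨_, Set.Nonempty.csInf_mem ⟨s, hs⟩ pathMaxima_finite, h⟩,
    fun ⟨s, hs, hsr⟩ => (csInf_le pathMaxima_finite.bddBelow hs).trans hsr⟩

theorem subdomUltra_le [Finite X] (hxy : x ≠ y) : subdomUltra ω x y ≤ ω x y :=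
  (subdomUltra_le_iff hxy).mpr (.single le_rfl)

theorem subdomUltra_comm [Finite X] (hω : ∀ a b, ω a b = ω b a) (x y : X) :
    subdomUltra ω x y = subdomUltra ω y x := by
  have key : ∀ a b : X, a ≠ b → subdomUltra ω a b ≤ subdomUltra ω b a := fun a b hab =>
    (subdomUltra_le_iff hab).mpr <|
      TransGen.mono (fun c d h => (hω c d).trans_le h) _ _
        (transGen_swap.mpr ((subdomUltra_le_iff hab.symm).mp le_rfl))
  rcases eq_or_ne x y with rfl | hxy
  · rfl
  · exact le_antisymm (key x y hxy) (key y x hxy.symm)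

theorem subdomUltra_le_max [Finite X] (hxy : x ≠ y) (hyz : y ≠ z) (hxz : x ≠ z) :
    subdomUltra ω x z ≤ max (subdomUltra ω x y) (subdomUltra ω y z) :=
  (subdomUltra_le_iff hxz).mpr <|
    ((subdomUltra_le_iff hxy).mp (le_max_left _ _)).trans
      ((subdomUltra_le_iff hyz).mp (le_max_right _ _))

theorem isUltrametricMap_subdomUltra [Finite X] (hω : ∀ a b, ω a b = ω b a) :
    IsUltrametricMap (subdomUltra ω) :=
  ⟨⟨fun _ => if_pos rfl, subdomUltra_comm hω⟩, fun _ _ _ => subdomUltra_le_max⟩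

end Subdominant

namespace IsUltrametricMap

variable {δ : X → X → ℝ}

theorem offDiag_add_const (hδ : IsUltrametricMap δ) (c : ℝ) :
    IsUltrametricMap (fun x y => if x = y then 0 else δ x y + c) := by
  refine ⟨⟨fun x => if_pos rfl, fun x y => ?_⟩, fun x y z hxy hyz hxz => ?_⟩
  · rcases eq_or_ne x y with rfl | hxy
    · rfl
    · simp only [if_neg hxy, if_neg hxy.symm, hδ.1.2 x y]
  · simp only [if_neg hxy, if_neg hyz, if_neg hxz, max_add_add_right]
    linarith [hδ.2 x y z hxy hyz hxz]

theorem le_of_transGen (hδ : IsUltrametricMap δ) {ρ : ℝ} {x y : X}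
    (h : TransGen (fun a b => a ≠ b → δ a b ≤ ρ) x y) (hxy : x ≠ y) : δ x y ≤ ρ := by
  induction h with
  | single h => exact h hxy
  | @tail b c _ hbc ih =>
    rcases eq_or_ne x b with rfl | hxb
    · exact hbc hxy
    rcases eq_or_ne b c with rfl | hbc'
    · exact ih hxy
    exact (hδ.2 x b c hxb hbc' hxy).trans (max_le (ih hxb) (hbc hbc'))

theorem le_subdomUltra_add [Finite X] {ω : X → X → ℝ} (hδ : IsUltrametricMap δ) {η : ℝ}
    (hη : ∀ a b, a ≠ b → |ω a b - δ a b| ≤ η) {x y : X} (hxy : x ≠ y) :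
    δ x y ≤ subdomUltra ω x y + η :=
  hδ.le_of_transGen
    (TransGen.mono (fun a b hab hne => by linarith [(abs_le.mp (hη a b hne)).1]) _ _
      ((subdomUltra_le_iff (ω := ω) hxy).mp le_rfl))
    hxy

end IsUltrametricMap

section OffDiagonal

variable (f : X → X → ℝ)

def offDiagValues : Set ℝ := {r | ∃ x y : X, x ≠ y ∧ r = f x y}

theorem offDiagValues_finite [Finite X] : (offDiagValues f).Finite :=
  (Set.finite_range (Function.uncurry f)).subset fun _ ⟨x, y, _, hr⟩ => ⟨(x, y), hr.symm⟩

theorem offDiagValues_nonempty [Nontrivial X] : (offDiagValues f).Nonempty :=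
  let ⟨x, y, hxy⟩ := exists_pair_ne X
  ⟨f x y, x, y, hxy, rfl⟩

theorem le_sSup_offDiagValues [Finite X] {x y : X} (hxy : x ≠ y) :
    f x y ≤ sSup (offDiagValues f) :=
  le_csSup (offDiagValues_finite f).bddAbove ⟨x, y, hxy, rfl⟩

theorem sSup_offDiagValues_le [Nontrivial X] {c : ℝ} (h : ∀ x y, x ≠ y → f x y ≤ c) :
    sSup (offDiagValues f) ≤ c :=
  csSup_le (offDiagValues_nonempty f) fun _ ⟨x, y, hxy, hr⟩ => hr ▸ h x y hxy

theorem exists_eq_sSup_offDiagValues [Finite X] [Nontrivial X] :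
    ∃ x y, x ≠ y ∧ f x y = sSup (offDiagValues f) :=
  let ⟨x, y, hxy, h⟩ := (offDiagValues_nonempty f).csSup_mem (offDiagValues_finite f)
  ⟨x, y, hxy, h.symm⟩

end OffDiagonal

/-- **Chepoi–Fichet.** For a dissimilarity map ω on a finite set X with at
least two elements, with ω_U its subdominant ultrametric and
ε = (1/2)·max_{x ≠ y} (ω(x,y) − ω_U(x,y)), the map ω_U^{+ε} (which adds ε off the
diagonal) is an ultrametric, it is ℓ∞-closest to ω among all ultrametrics, and its
ℓ∞-distance to ω equals ε. -/
theorem stmt16 [Fintype X] [Nontrivial X] (ω : X → X → ℝ) (hω : IsDissimilarity ω)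
    (ε : ℝ)
    (hε : ε = (1 / 2) * sSup {r : ℝ | ∃ x y : X, x ≠ y ∧ r = ω x y - subdomUltra ω x y}) :
    IsUltrametricMap (fun x y => if x = y then 0 else subdomUltra ω x y + ε) ∧
    (∀ δ : X → X → ℝ, IsUltrametricMap δ →
      sSup {r : ℝ | ∃ x y : X, x ≠ y ∧ r = |ω x y - (subdomUltra ω x y + ε)|} ≤
        sSup {r : ℝ | ∃ x y : X, x ≠ y ∧ r = |ω x y - δ x y|}) ∧
    sSup {r : ℝ | ∃ x y : X, x ≠ y ∧ r = |ω x y - (subdomUltra ω x y + ε)|} = ε := by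
  change ε = 1 / 2 * sSup (offDiagValues fun x y => ω x y - subdomUltra ω x y) at hε
  obtain ⟨p, q, hpq, hpq_max⟩ :=
    exists_eq_sSup_offDiagValues fun x y => ω x y - subdomUltra ω x y
  have hgap : ∀ x y, x ≠ y → ω x y - subdomUltra ω x y ≤ 2 * ε := fun x y hxy => by
    linarith [le_sSup_offDiagValues (fun x y => ω x y - subdomUltra ω x y) hxy]
  have hdist : sSup (offDiagValues fun x y => |ω x y - (subdomUltra ω x y + ε)|) = ε := by
    refine le_antisymm (sSup_offDiagValues_le _ fun x y hxy => abs_le.mpr ⟨?_, ?_⟩) ?_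
    · linarith [subdomUltra_le (ω := ω) hxy]
    · linarith [hgap x y hxy]
    · have hpq_dist : ω p q - (subdomUltra ω p q + ε) = ε := by linarith
      have hε_nonneg : 0 ≤ ε := by linarith [subdomUltra_le (ω := ω) hpq]
      calc ε = |ω p q - (subdomUltra ω p q + ε)| := by rw [hpq_dist, abs_of_nonneg hε_nonneg]
        _ ≤ _ := le_sSup_offDiagValues (fun x y => |ω x y - (subdomUltra ω x y + ε)|) hpq
  refine ⟨(isUltrametricMap_subdomUltra hω.2).offDiag_add_const ε, fun δ hδ => ?_, hdist⟩
  have hη := fun x y (hxy : x ≠ y) => le_sSup_offDiagValues (fun x y => |ω x y - δ x y|) hxy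
  have hδ_le := hδ.le_subdomUltra_add hη hpq
  have hω_le := (abs_le.mp (hη p q hpq)).2
  change sSup (offDiagValues _) ≤ sSup (offDiagValues _)
  rw [hdist]
  linarith
end
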